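/- For a standard episturmian word s with directive word x₁x₂x₃⋯, palindromic prefixes u₁ = ε, u₂, u₃, … satisfying u_{n+1} = (u_n x_n)^{(+)}, and words h_n = μ_n(x_{n+1}) where μ₀ = Id and μ_n = Ψ_{x₁}⋯Ψ_{x_n}, one has u_{n+1} = h_{n−1} u_n for all n ≥ 1; consequently u_n = h_{n−2} h_{n−3} ⋯ h₁ h₀ for all n > 1. -/

import Mathlib

/-- The prefix of length `k` of an infinite word `w : ℕ → A`. -/
def pref {A : Type*} (w : ℕ → A) (k : ℕ) : List A := (List.range k).map w

/-- `u` is a (finite) factor of the infinite word `w`. -/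
def IsFactor {A : Type*} (w : ℕ → A) (u : List A) : Prop :=
  ∃ i : ℕ, u = (List.range u.length).map (fun j => w (i + j))

/-- Prepend a letter to an infinite word. -/
def consW {A : Type*} (a : A) (s : ℕ → A) : ℕ → A := fun n => match n with
  | 0 => a
  | n + 1 => s n

/-- Concatenation of a finite word with an infinite word. -/
def catW {A : Type*} (u : List A) (w : ℕ → A) : ℕ → A := fun n =>
  if h : n < u.length then u.get ⟨n, h⟩ else w (n - u.length)

/-- `u` is the lexicographically smallest factor of `w` of length `k`,
w.r.t. the strict order `lt` on letters. -/
def IsMinFactor {A : Type*} (lt : A → A → Prop) (w : ℕ → A) (k : ℕ) (u : List A) : Prop :=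
  IsFactor w u ∧ u.length = k ∧
    ∀ v, IsFactor w v → v.length = k → u = v ∨ List.Lex lt u v

/-- `u` is the lexicographically greatest factor of `w` of length `k`. -/
def IsMaxFactor {A : Type*} (lt : A → A → Prop) (w : ℕ → A) (k : ℕ) (u : List A) : Prop :=
  IsFactor w u ∧ u.length = k ∧
    ∀ v, IsFactor w v → v.length = k → u = v ∨ List.Lex lt v u

/-- `m = min(w)`: every length-`k` prefix of `m` is the lexicographically
smallest factor of `w` of length `k`. -/
def IsMinWord {A : Type*} (lt : A → A → Prop) (w m : ℕ → A) : Prop :=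
  ∀ k : ℕ, IsMinFactor lt w k (pref m k)

/-- `m = max(w)`. -/
def IsMaxWord {A : Type*} (lt : A → A → Prop) (w m : ℕ → A) : Prop :=
  ∀ k : ℕ, IsMaxFactor lt w k (pref m k)

/-- The letter `z` is separating for `t`: every length-2 factor of `t` contains `z`. -/
def Separating {A : Type*} (z : A) (t : ℕ → A) : Prop :=
  ∀ u, IsFactor t u → u.length = 2 → z ∈ u

/-- The episturmian morphism `Ψ_z` on finite words: `z ↦ z`, `x ↦ zx` for `x ≠ z`. -/
def psiL {A : Type*} [DecidableEq A] (z : A) (u : List A) : List A :=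
  u.flatMap (fun x => if x = z then [z] else [z, x])

/-- `t = Ψ_z(y)` for infinite words: the `Ψ_z`-image of every prefix of `y`
is a prefix of `t`. -/
def PsiImage {A : Type*} [DecidableEq A] (z : A) (y t : ℕ → A) : Prop :=
  ∀ n : ℕ, psiL z (pref y n) = pref t (psiL z (pref y n)).length

/-- `u` is a left special factor of `w`. -/
def LeftSpecial {A : Type*} (w : ℕ → A) (u : List A) : Prop :=
  ∃ a b : A, a ≠ b ∧ IsFactor w (a :: u) ∧ IsFactor w (b :: u)

/-- `u` is a right special factor of `w`. -/
def RightSpecial {A : Type*} (w : ℕ → A) (u : List A) : Prop :=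
  ∃ a b : A, a ≠ b ∧ IsFactor w (u ++ [a]) ∧ IsFactor w (u ++ [b])

/-- `w` is a standard episturmian word: factors closed under reversal and
every left special factor is a prefix. -/
def StdEpisturmian {A : Type*} (w : ℕ → A) : Prop :=
  (∀ u, IsFactor w u → IsFactor w u.reverse) ∧
  (∀ u, LeftSpecial w u → u = pref w u.length)

/-- `w` is an `A`-strict standard episturmian word (standard Arnoux-Rauzy sequence):
standard episturmian and every prefix has every letter as a left extension. -/
def StrictStdEpisturmian {A : Type*} (w : ℕ → A) : Prop :=
  StdEpisturmian w ∧ ∀ (n : ℕ) (a : A), IsFactor w (a :: pref w n)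

/-- `w` is episturmian: factors closed under reversal and at most one right
special factor of each length. -/
def Episturmian {A : Type*} (w : ℕ → A) : Prop :=
  (∀ u, IsFactor w u → IsFactor w u.reverse) ∧
  (∀ u v, RightSpecial w u → RightSpecial w v → u.length = v.length → u = v)

/-- `w` is an `A`-strict episturmian word: it has the same set of factors as some
`A`-strict standard episturmian word. -/
def StrictEpisturmian {A : Type*} (w : ℕ → A) : Prop :=
  ∃ s : ℕ → A, StrictStdEpisturmian s ∧ ∀ u, IsFactor w u ↔ IsFactor s u

/-- `t` is fine: there is an infinite word `s` such that for every total order on the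
alphabet and every letter `a` minimal for that order, `min(t) = a·s`. -/
def Fine {A : Type*} (t : ℕ → A) : Prop :=
  ∃ s : ℕ → A, ∀ (l : LinearOrder A) (a : A), (∀ b, l.le a b) →
    IsMinWord l.lt t (consW a s)

/-- `p` is the palindromic right-closure of `w`: the shortest palindrome having `w`
as a prefix. -/
def IsPalClosure {A : Type*} (w p : List A) : Prop :=
  p.reverse = p ∧ w <+: p ∧ ∀ q : List A, q.reverse = q → w <+: q → p.length ≤ q.length

/-- `μ_n = Ψ_{x₁} ∘ Ψ_{x₂} ∘ ⋯ ∘ Ψ_{xₙ}` for the directive word `x₁x₂x₃⋯`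
(given as `x : ℕ → A` with letters `x 1, x 2, …`); `μ_0 = Id`. -/
def muM {A : Type*} [DecidableEq A] (x : ℕ → A) (n : ℕ) : List A → List A :=
  ((List.range n).map (fun i => x (i + 1))).foldr (fun c f => psiL c ∘ f) id

/-- `h_n = μ_n(x_{n+1})`. -/
def hW {A : Type*} [DecidableEq A] (x : ℕ → A) (n : ℕ) : List A :=
  muM x n [x (n + 1)]

/-! Let `pal [] = []` and `pal (a v) = Ψ_a(pal v) a`. Justin's formula `pal (v b) = μ_v(b) pal v`
is then a one-line induction on `v`, and `u_{n+1} = pal (x₁ ⋯ xₙ)` once `pal (v b)` is known to be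
the palindromic closure of `pal v · b`. Since `pal (a v b) = Ψ_a(pal (v b)) a`, this amounts to
`(Ψ_a(w) a)⁽⁺⁾ = Ψ_a(w⁽⁺⁾) a`, and `Ψ_a(w)⁽⁺⁾ = Ψ_a(w⁽⁺⁾) a` when `w` ends with a letter `b ≠ a`.

Both come from one description of the closure: if `t` is the longest palindromic suffix of
`w = c t`, then `w⁽⁺⁾ = w · reverse c`. Every suffix of `Ψ_a(w)` is `Ψ_a(t)` or `y Ψ_a(t)`
(`y ≠ a`) for a suffix `t`, resp. `y t`, of `w`, and `Ψ_a(t) a` is a palindrome exactly when `t`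
is. So the longest palindromic suffix of `Ψ_a(w) a` is `Ψ_a(t) a`, and, when `w` ends with
`b ≠ a` (so that `t = b t'`), that of `Ψ_a(w)` is `b Ψ_a(t')`. -/

open List

section Palindrome

variable {α : Type*}

def IsLongestPalSuffix (w t : List α) : Prop :=
  t.reverse = t ∧ t <:+ w ∧ ∀ s : List α, s.reverse = s → s <:+ w → s.length ≤ t.length

theorem head?_eq_getLast?_of_reverse_eq {l : List α} (h : l.reverse = l) :
    l.head? = l.getLast? := by
  rw [← head?_reverse, h]

theorem cons_append_singleton_reverse_eq_iff {x : α} {m : List α} :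
    (x :: m ++ [x]).reverse = x :: m ++ [x] ↔ m.reverse = m := by
  simp

theorem reverse_append_append_reverse {c t : List α} (ht : t.reverse = t) :
    (c ++ t ++ c.reverse).reverse = c ++ t ++ c.reverse := by
  simp [ht]

theorem exists_reverse_eq_of_append_reverse_eq {w z : List α} (h : (w ++ z).reverse = w ++ z)
    (hz : z.length ≤ w.length) : ∃ m, w = z.reverse ++ m ∧ m.reverse = m := by
  rw [reverse_append] at h
  obtain ⟨m, hw, hwz⟩ | ⟨m, hzw, -⟩ := append_eq_append_iff.mp h
  · refine ⟨m, hw, append_cancel_right (bs := z) ?_⟩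
    rw [← hwz, hw]
    simp
  · have hm : m = [] := by
      have := congrArg length hzw
      simp only [length_append, length_reverse] at this
      exact length_eq_zero_iff.mp (by omega)
    exact ⟨[], by simp [hzw, hm], rfl⟩

theorem IsLongestPalSuffix.isPalClosure {w c t : List α} (hw : w = c ++ t)
    (ht : IsLongestPalSuffix w t) : IsPalClosure w (w ++ c.reverse) := by
  subst hw
  refine ⟨reverse_append_append_reverse ht.1, prefix_append _ _, ?_⟩
  rintro q hq ⟨z, rfl⟩
  by_contra! hlt
  simp only [length_append, length_reverse] at hlt
  obtain ⟨m, hm, hmpal⟩ := exists_reverse_eq_of_append_reverse_eq hq (by simp; omega)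
  have hmt := ht.2.2 m hmpal ⟨z.reverse, hm.symm⟩
  have := congrArg length hm
  simp only [length_append, length_reverse] at this
  omega

theorem IsPalClosure.exists_longestPalSuffix {w p : List α} (h : IsPalClosure w p) :
    ∃ c t, w = c ++ t ∧ IsLongestPalSuffix w t ∧ p = w ++ c.reverse := by
  obtain ⟨hp, ⟨z, rfl⟩, hmin⟩ := h
  have hz : z.length ≤ w.length := by
    simpa using hmin (w ++ w.reverse) (by simp) (prefix_append _ _)
  obtain ⟨t, hw, ht⟩ := exists_reverse_eq_of_append_reverse_eq hp hz
  refine ⟨z.reverse, t, hw, ⟨ht, ⟨_, hw.symm⟩, ?_⟩, by simp⟩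
  rintro s hs ⟨c, rfl⟩
  have := hmin (c ++ s ++ c.reverse) (reverse_append_append_reverse hs) (prefix_append _ _)
  have := congrArg length hw
  simp only [length_append, length_reverse] at *
  omega

theorem IsLongestPalSuffix.unique {w t t' : List α} (h : IsLongestPalSuffix w t)
    (h' : IsLongestPalSuffix w t') : t = t' := by
  have hle := h'.2.2 t h.1 h.2.1
  exact (suffix_of_suffix_length_le h.2.1 h'.2.1 hle).eq_of_length
    (le_antisymm hle (h.2.2 t' h'.1 h'.2.1))

theorem IsPalClosure.unique {w p p' : List α} (h : IsPalClosure w p) (h' : IsPalClosure w p') :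
    p = p' := by
  obtain ⟨c, t, hw, ht, rfl⟩ := h.exists_longestPalSuffix
  obtain ⟨c', t', hw', ht', rfl⟩ := h'.exists_longestPalSuffix
  obtain rfl := ht.unique ht'
  rw [append_cancel_right (hw.symm.trans hw')]

theorem IsLongestPalSuffix.exists_eq_cons {w t : List α} {b : α}
    (h : IsLongestPalSuffix (w ++ [b]) t) : ∃ t', t = b :: t' := by
  rcases suffix_concat_iff.mp h.2.1 with rfl | ⟨s, rfl, -⟩
  · simpa using h.2.2 [b] rfl (suffix_append _ _)
  · exact head?_eq_some_iff.mp (by simp [head?_eq_getLast?_of_reverse_eq h.1])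

end Palindrome

section Psi

variable {A : Type*} [DecidableEq A] (a : A)

@[simp] theorem psiL_nil : psiL a [] = [] := rfl

@[simp] theorem psiL_append (u v : List A) : psiL a (u ++ v) = psiL a u ++ psiL a v :=
  flatMap_append

@[simp] theorem psiL_cons_self (u : List A) : psiL a (a :: u) = a :: psiL a u := by
  simp [psiL]

@[simp] theorem psiL_cons_of_ne {x : A} (hx : x ≠ a) (u : List A) :
    psiL a (x :: u) = a :: x :: psiL a u := by
  simp [psiL, hx]

@[simp] theorem psiL_eq_nil_iff {u : List A} : psiL a u = [] ↔ u = [] := by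
  rcases u with _ | ⟨x, u⟩
  · simp
  · by_cases hx : x = a
    · simp [hx]
    · simp [hx]

theorem head?_psiL (u : List A) : (psiL a u).head? = u.head?.map fun _ => a := by
  rcases u with _ | ⟨x, u⟩
  · rfl
  · by_cases hx : x = a
    · simp [hx]
    · simp [hx]

theorem psiL_ne_cons_of_ne {y : A} (hy : y ≠ a) (u r : List A) : psiL a u ≠ y :: r := by
  intro h
  have := head?_psiL a u
  rw [h] at this
  cases u <;> simp at this
  exact hy this

theorem psiL_injective : Function.Injective (psiL a) := by
  intro u v h
  induction u generalizing v with
  | nil => simpa [eq_comm] using h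
  | cons x u ih =>
    rcases v with _ | ⟨y, v⟩
    · simp at h
    by_cases hx : x = a <;> by_cases hy : y = a
    · subst hx hy
      simpa using ih (by simpa using h)
    · subst hx
      simp only [psiL_cons_self, psiL_cons_of_ne x hy, cons.injEq, true_and] at h
      exact absurd h (psiL_ne_cons_of_ne x hy _ _)
    · subst hy
      simp only [psiL_cons_self, psiL_cons_of_ne y hx, cons.injEq, true_and] at h
      exact absurd h.symm (psiL_ne_cons_of_ne y hx _ _)
    · simp only [psiL_cons_of_ne a hx, psiL_cons_of_ne a hy, cons.injEq, true_and] at h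
      rw [h.1, ih h.2]

theorem reverse_psiL_append_singleton (t : List A) :
    (psiL a t ++ [a]).reverse = psiL a t.reverse ++ [a] := by
  induction t with
  | nil => rfl
  | cons x t ih =>
    rw [reverse_concat] at ih
    by_cases hx : x = a
    · subst hx
      simp [← ih]
    · rw [psiL_cons_of_ne a hx, reverse_cons, psiL_append, psiL_cons_of_ne a hx,
        show a :: x :: psiL a t ++ [a] = [a, x] ++ (psiL a t ++ [a]) from rfl,
        reverse_append, reverse_concat, ih]
      simp

theorem psiL_append_singleton_reverse_eq_iff {t : List A} :
    (psiL a t ++ [a]).reverse = psiL a t ++ [a] ↔ t.reverse = t := by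
  rw [reverse_psiL_append_singleton, append_left_inj, (psiL_injective a).eq_iff]

theorem suffix_psiL {s w : List A} (h : s <:+ psiL a w) :
    (∃ t, t <:+ w ∧ s = psiL a t) ∨ ∃ y t, y ≠ a ∧ y :: t <:+ w ∧ s = y :: psiL a t := by
  induction w generalizing s with
  | nil => exact .inl ⟨[], suffix_refl _, by simpa using h⟩
  | cons x w ih =>
    have lift : s <:+ psiL a w → (∃ t, t <:+ x :: w ∧ s = psiL a t) ∨
        ∃ y t, y ≠ a ∧ y :: t <:+ x :: w ∧ s = y :: psiL a t := fun h' => (ih h').imp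
      (fun ⟨t, ht, e⟩ => ⟨t, ht.trans (suffix_cons x w), e⟩)
      (fun ⟨y, t, hy, ht, e⟩ => ⟨y, t, hy, ht.trans (suffix_cons x w), e⟩)
    by_cases hx : x = a
    · subst hx
      rw [psiL_cons_self, suffix_cons_iff] at h
      rcases h with rfl | h
      · exact .inl ⟨_, suffix_refl _, (psiL_cons_self x w).symm⟩
      · exact lift h
    · rw [psiL_cons_of_ne a hx, suffix_cons_iff, suffix_cons_iff] at h
      rcases h with rfl | rfl | h
      · exact .inl ⟨_, suffix_refl _, (psiL_cons_of_ne a hx w).symm⟩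
      · exact .inr ⟨x, w, hx, suffix_refl _, rfl⟩
      · exact lift h

variable {a}

theorem IsLongestPalSuffix.psiL_append_singleton {w t : List A} (h : IsLongestPalSuffix w t) :
    IsLongestPalSuffix (psiL a w ++ [a]) (psiL a t ++ [a]) := by
  obtain ⟨ht, ⟨c, rfl⟩, hmax⟩ := h
  refine ⟨(psiL_append_singleton_reverse_eq_iff a).2 ht, ⟨psiL a c, by simp⟩, ?_⟩
  intro s hs hsw
  rcases suffix_concat_iff.mp hsw with rfl | ⟨s, rfl, hs'⟩
  · simp
  rcases suffix_psiL a hs' with ⟨t', ht', rfl⟩ | ⟨y, t', hy, -, rfl⟩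
  · have hlen := hmax t' ((psiL_append_singleton_reverse_eq_iff a).1 hs) ht'
    have hsuf : psiL a t' <:+ psiL a t :=
      (suffix_of_suffix_length_le ht' (suffix_append c t) hlen).flatMap _
    simpa using hsuf.length_le
  · have hhead := head?_eq_getLast?_of_reverse_eq hs
    rw [getLast?_concat] at hhead
    simp at hhead
    exact absurd hhead hy

theorem IsLongestPalSuffix.psiL_of_ne {w t : List A} {b : A}
    (h : IsLongestPalSuffix (w ++ [b]) (b :: t)) (hb : b ≠ a) :
    IsLongestPalSuffix (psiL a (w ++ [b])) (b :: psiL a t) := by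
  obtain ⟨ht, htw, hmax⟩ := h
  have hpal := (psiL_append_singleton_reverse_eq_iff a).2 ht
  rw [psiL_cons_of_ne a hb] at hpal
  refine ⟨cons_append_singleton_reverse_eq_iff.1 hpal,
    (suffix_cons a _).trans (psiL_cons_of_ne a hb t ▸ htw.flatMap _), ?_⟩
  intro s hs hsw
  rcases suffix_psiL a hsw with ⟨t', -, rfl⟩ | ⟨y, t', hy, ht', rfl⟩
  · have hend : psiL a (w ++ [b]) = psiL a w ++ [a] ++ [b] := by simp [hb]
    rcases suffix_concat_iff.mp (hend ▸ hsw) with h0 | ⟨s', hs', -⟩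
    · simp [h0]
    · have hhead := head?_eq_getLast?_of_reverse_eq hs
      rw [hs', getLast?_concat, ← hs', head?_psiL] at hhead
      cases t' <;> simp at hhead
      exact absurd hhead.symm hb
  · have hyt : (y :: t').reverse = y :: t' := by
      refine (psiL_append_singleton_reverse_eq_iff a).1 ?_
      rw [psiL_cons_of_ne a hy]
      exact cons_append_singleton_reverse_eq_iff.2 hs
    have hsuf : psiL a (y :: t') <:+ psiL a (b :: t) :=
      (suffix_of_suffix_length_le ht' htw (hmax _ hyt ht')).flatMap _
    rw [psiL_cons_of_ne a hy, psiL_cons_of_ne a hb] at hsuf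
    simpa using hsuf.length_le

theorem IsPalClosure.psiL_append_singleton {w p : List A} (h : IsPalClosure w p) :
    IsPalClosure (psiL a w ++ [a]) (psiL a p ++ [a]) := by
  obtain ⟨c, t, rfl, ht, rfl⟩ := h.exists_longestPalSuffix
  have hc : psiL a c.reverse ++ [a] = a :: (psiL a c).reverse := by
    simpa using (reverse_psiL_append_singleton a c).symm
  convert (ht.psiL_append_singleton (a := a)).isPalClosure (c := psiL a c) (by simp) using 1
  simp [hc]

theorem IsPalClosure.psiL_of_ne {w p : List A} {b : A} (h : IsPalClosure (w ++ [b]) p)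
    (hb : b ≠ a) : IsPalClosure (psiL a (w ++ [b])) (psiL a p ++ [a]) := by
  obtain ⟨c, t, hct, ht, rfl⟩ := h.exists_longestPalSuffix
  obtain ⟨t, rfl⟩ := ht.exists_eq_cons
  have hdec : psiL a (w ++ [b]) = psiL a c ++ [a] ++ b :: psiL a t := by
    rw [hct]
    simp [hb]
  convert (ht.psiL_of_ne hb).isPalClosure hdec using 1
  rw [reverse_psiL_append_singleton]
  simp [hb]

def pal : List A → List A
  | [] => []
  | a :: v => psiL a (pal v) ++ [a]

theorem isPalClosure_pal_append_singleton (v : List A) (b : A) :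
    IsPalClosure (pal v ++ [b]) (pal (v ++ [b])) := by
  induction v with
  | nil => exact ⟨rfl, prefix_refl _, fun q _ hq => by simpa [pal] using hq.length_le⟩
  | cons a v ih =>
    by_cases hb : b = a
    · subst hb
      simpa [pal] using ih.psiL_append_singleton (a := b)
    · simpa [pal, hb] using ih.psiL_of_ne hb

def mu (v : List A) : List A → List A := v.foldr (fun c f => psiL c ∘ f) id

theorem pal_append_singleton (v : List A) (b : A) : pal (v ++ [b]) = mu v [b] ++ pal v := by
  induction v with
  | nil => rfl
  | cons a v ih => simp [pal, mu, ih]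

end Psi

-- `x₁ ⋯ xₙ`: the letter `x 0` is never used.
def directivePrefix {A : Type*} (x : ℕ → A) (n : ℕ) : List A :=
  (List.range n).map fun i => x (i + 1)

theorem directivePrefix_succ {A : Type*} (x : ℕ → A) (n : ℕ) :
    directivePrefix x (n + 1) = directivePrefix x n ++ [x (n + 1)] := by
  simp [directivePrefix, range_succ]

theorem pal_directivePrefix_succ {A : Type*} [DecidableEq A] (x : ℕ → A) (n : ℕ) :
    pal (directivePrefix x (n + 1)) = hW x n ++ pal (directivePrefix x n) := by
  rw [directivePrefix_succ, pal_append_singleton]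
  rfl

theorem pal_directivePrefix {A : Type*} [DecidableEq A] (x : ℕ → A) (n : ℕ) :
    pal (directivePrefix x n) = ((List.range n).reverse.map (hW x)).flatten := by
  induction n with
  | zero => rfl
  | succ n ih => simp [pal_directivePrefix_succ, ih, range_succ]

/-- Justin's formula: for the palindromic prefixes `u₁ = ε`, `u_{n+1} = (u_n x_n)⁽⁺⁾`
of a standard episturmian word directed by `x₁x₂x₃⋯`, one has
`u_{n+1} = h_{n-1} u_n` for `n ≥ 1`, and hence `u_n = h_{n-2} h_{n-3} ⋯ h₁ h₀`
for `n > 1`. -/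
theorem stmt_19 {A : Type*} [DecidableEq A] (x : ℕ → A) (u : ℕ → List A)
    (h1 : u 1 = []) (hrec : ∀ n : ℕ, 1 ≤ n → IsPalClosure (u n ++ [x n]) (u (n + 1))) :
    (∀ n : ℕ, 1 ≤ n → u (n + 1) = hW x (n - 1) ++ u n) ∧
    (∀ n : ℕ, 1 < n → u n = ((List.range (n - 1)).reverse.map (hW x)).flatten) := by
  have hu : ∀ n, 1 ≤ n → u n = pal (directivePrefix x (n - 1)) := by
    intro n hn
    induction n, hn using Nat.le_induction with
    | base => exact h1
    | succ n hn ih =>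
      obtain ⟨m, rfl⟩ := Nat.exists_eq_add_of_le' hn
      rw [Nat.add_sub_cancel] at ih ⊢
      rw [directivePrefix_succ]
      exact (hrec _ hn).unique (ih ▸ isPalClosure_pal_append_singleton _ _)
  refine ⟨fun n hn => ?_, fun n hn => ?_⟩
  · obtain ⟨m, rfl⟩ := Nat.exists_eq_add_of_le' hn
    rw [hu _ (by omega), hu _ hn, Nat.add_sub_cancel, Nat.add_sub_cancel,
      pal_directivePrefix_succ]
  · rw [hu n hn.le, pal_directivePrefix]
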